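/- Let h be an open unit hemisphere of S^2 with boundary great circle C, and let H be a finite set of open unit hemispheres such that S^2 \ h ⊆ ∪H. Then {g ∩ C : g ∈ H, g ∩ C ≠ ∅} is a covering family of open semicircles of C, and hence contains a subfamily of size at most 4 covering C. -/

import Mathlib

open scoped RealInnerProductSpace

/-- The unit sphere `S² ⊆ ℝ³`. -/
noncomputable def unitSphere : Set (EuclideanSpace ℝ (Fin 3)) := Metric.sphere 0 1

/-- The open unit hemisphere `H(v) = {x ∈ S² | ⟪v, x⟫ > 0}`. -/
noncomputable def openHemisphere (v : EuclideanSpace ℝ (Fin 3)) :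
    Set (EuclideanSpace ℝ (Fin 3)) := {x ∈ unitSphere | 0 < ⟪v, x⟫}

/-- The closed unit hemisphere `{x ∈ S² | ⟪v, x⟫ ≥ 0}`. -/
noncomputable def closedHemisphere (v : EuclideanSpace ℝ (Fin 3)) :
    Set (EuclideanSpace ℝ (Fin 3)) := {x ∈ unitSphere | 0 ≤ ⟪v, x⟫}

/-- The boundary great circle `C = ∂H(v) = {x ∈ S² | ⟪v, x⟫ = 0}`. -/
noncomputable def greatCircle (v : EuclideanSpace ℝ (Fin 3)) :
    Set (EuclideanSpace ℝ (Fin 3)) := {x ∈ unitSphere | ⟪v, x⟫ = 0}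

/-!
Projecting the poles `w ∈ H` orthogonally onto the plane `v^⊥` turns each trace `g ∩ C` into the
set of points of `C` on the positive side of the projected pole, so the question becomes one about
finitely many vectors `D` of a Euclidean plane whose open half-planes cover the punctured plane.
Then `0` lies in the convex hull of `D` (otherwise a separating functional exhibits an uncovered
direction), and Carathéodory writes `0` as a positive combination of affinely independent members
of `D`. If these span the plane they already cover it, and there are at most three of them;
otherwise they lie on a line, there are at most two of them, and two more members covering the two
unit normals of that line complete the cover.
-/

open Module Submodule

theorem vectorSpan_le_span {k V : Type*} [Ring k] [AddCommGroup V] [Module k V] (s : Set V) :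
    vectorSpan k s ≤ span k s := by
  rw [vectorSpan_def, span_le]
  rintro _ ⟨a, ha, b, hb, rfl⟩
  exact sub_mem (subset_span ha) (subset_span hb)

section HalfspacesCover

variable {E : Type*} [NormedAddCommGroup E] [InnerProductSpace ℝ E]

def HalfspacesCover (D : Set E) : Prop := ∀ x ≠ (0 : E), ∃ d ∈ D, 0 < ⟪d, x⟫

theorem HalfspacesCover.diff_zero {D : Set E} (h : HalfspacesCover D) :
    HalfspacesCover (D \ {0}) := by
  intro x hx
  obtain ⟨d, hd, hdx⟩ := h x hx
  exact ⟨d, ⟨hd, fun h0 => by simp [Set.mem_singleton_iff.mp h0] at hdx⟩, hdx⟩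

theorem HalfspacesCover.zero_mem_convexHull [CompleteSpace E] [Nontrivial E] {D : Set E}
    (hfin : D.Finite) (h : HalfspacesCover D) : (0 : E) ∈ convexHull ℝ D := by
  by_contra h0
  obtain ⟨f, u, hf0, hfD⟩ := geometric_hahn_banach_point_closed (convex_convexHull ℝ D)
    (hfin.isCompact_convexHull (𝕜 := ℝ)).isClosed h0
  set y := (InnerProductSpace.toDual ℝ E).symm f
  have hyD : ∀ d ∈ D, 0 < ⟪y, d⟫ := fun d hd => by
    rw [InnerProductSpace.toDual_symm_apply (𝕜 := ℝ)]
    exact (map_zero f ▸ hf0).trans (hfD d (subset_convexHull ℝ D hd))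
  obtain ⟨x, hx⟩ := exists_ne (0 : E)
  obtain ⟨d₀, hd₀, -⟩ := h x hx
  have hy : y ≠ 0 := fun hy => by simpa [hy] using hyD d₀ hd₀
  obtain ⟨d, hd, hdy⟩ := h (-y) (neg_ne_zero.mpr hy)
  rw [inner_neg_right, real_inner_comm] at hdy
  linarith [hyD d hd]

theorem inner_eq_zero_of_sum_smul_eq_zero {ι : Type*} [Fintype ι] {z : ι → E} {w : ι → ℝ}
    (hw : ∀ i, 0 < w i) (hz : ∑ i, w i • z i = 0) {x : E} (hx : ∀ i, ⟪z i, x⟫ ≤ 0) (i : ι) :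
    ⟪z i, x⟫ = 0 := by
  have hsum : ∑ j, w j * ⟪z j, x⟫ = 0 := by
    simp only [← real_inner_smul_left, ← sum_inner, hz, inner_zero_left]
  have hterm := (Finset.sum_eq_zero_iff_of_nonpos fun j _ =>
    mul_nonpos_of_nonneg_of_nonpos (hw j).le (hx j)).mp hsum i (Finset.mem_univ i)
  exact (mul_eq_zero.mp hterm).resolve_left (hw i).ne'

theorem halfspacesCover_union_of_sum_smul_eq_zero {ι : Type*} [Fintype ι] {z : ι → E}
    {w : ι → ℝ} (hw : ∀ i, 0 < w i) (hz : ∑ i, w i • z i = 0) {T : Set E}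
    (hT : ∀ x ∈ (span ℝ (Set.range z))ᗮ, x ≠ 0 → ∃ d ∈ T, 0 < ⟪d, x⟫) :
    HalfspacesCover (Set.range z ∪ T) := by
  intro x hx
  by_contra! hle
  have hxK : x ∈ (span ℝ (Set.range z))ᗮ := by
    refine (span_singleton_le_iff_mem x _).1 (isOrtho_span.2 ?_)
    rintro _ rfl _ ⟨i, rfl⟩
    rw [real_inner_comm]
    exact inner_eq_zero_of_sum_smul_eq_zero hw hz (fun j => hle _ (Or.inl ⟨j, rfl⟩)) i
  obtain ⟨d, hd, hdx⟩ := hT x hxK hx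
  exact (hle d (Or.inr hd)).not_gt hdx

theorem HalfspacesCover.exists_pair_of_finrank_eq_one {D : Set E} (h : HalfspacesCover D)
    {L : Submodule ℝ E} (hL : finrank ℝ L = 1) :
    ∃ a ∈ D, ∃ b ∈ D, ∀ x ∈ L, x ≠ 0 → 0 < ⟪a, x⟫ ∨ 0 < ⟪b, x⟫ := by
  obtain ⟨n, hn, hL⟩ := finrank_eq_one_iff'.mp hL
  have hn' : (n : E) ≠ 0 := by simpa using hn
  obtain ⟨a, ha, han⟩ := h n hn'
  obtain ⟨b, hb, hbn⟩ := h (-n) (neg_ne_zero.mpr hn')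
  refine ⟨a, ha, b, hb, fun x hx hx0 => ?_⟩
  obtain ⟨c, hc⟩ := hL ⟨x, hx⟩
  obtain rfl : c • (n : E) = x := congrArg Subtype.val hc
  rw [real_inner_smul_right, real_inner_smul_right]
  rw [inner_neg_right] at hbn
  rcases lt_trichotomy c 0 with hc | hc | hc
  · right; nlinarith
  · simp [hc] at hx0
  · left; positivity

theorem HalfspacesCover.exists_subset_card_le_four (hE : finrank ℝ E = 2) {D : Finset E}
    (h : HalfspacesCover (D : Set E)) :
    ∃ R ⊆ D, R.card ≤ 4 ∧ HalfspacesCover (R : Set E) := by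
  classical
  have : FiniteDimensional ℝ E := Module.finite_of_finrank_eq_succ hE
  have : Nontrivial E := Module.nontrivial_of_finrank_eq_succ hE
  obtain ⟨ι, _, z, w, hzD, hz, hw, hw1, hwz⟩ :=
    eq_pos_convex_span_of_mem_convexHull (h.diff_zero.zero_mem_convexHull D.finite_toSet.sdiff)
  set K := span ℝ (Set.range z)
  have hcard : Fintype.card ι ≤ finrank ℝ K + 1 :=
    hz.card_le_finrank_succ.trans (by gcongr; exact Submodule.finrank_mono (vectorSpan_le_span _))
  have hK : 0 < finrank ℝ K := by
    obtain ⟨i⟩ : Nonempty ι := by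
      by_contra hι
      simp [not_nonempty_iff.mp hι] at hw1
    exact finrank_pos_iff_exists_ne_zero.mpr
      ⟨⟨z i, subset_span ⟨i, rfl⟩⟩, by simpa using (hzD ⟨i, rfl⟩).2⟩
  have hdim := K.finrank_add_finrank_orthogonal
  obtain ⟨T, hTD, hTcard, hT⟩ : ∃ T ⊆ D, T.card ≤ 2 * finrank ℝ Kᗮ ∧
      ∀ x ∈ Kᗮ, x ≠ 0 → ∃ d ∈ T, 0 < ⟪d, x⟫ := by
    rcases Nat.lt_or_ge (finrank ℝ Kᗮ) 1 with h0 | h1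
    · refine ⟨∅, Finset.empty_subset D, by simp, fun x hx hx0 => ?_⟩
      rw [Nat.lt_one_iff, Submodule.finrank_eq_zero] at h0
      exact absurd ((Submodule.mem_bot ℝ).mp (h0 ▸ hx)) hx0
    · obtain ⟨a, ha, b, hb, hab⟩ := h.exists_pair_of_finrank_eq_one (L := Kᗮ) (by omega)
      refine ⟨{a, b}, Finset.insert_subset ha (Finset.singleton_subset_iff.2 hb),
        Finset.card_le_two.trans (by omega), fun x hx hx0 => ?_⟩
      rcases hab x hx hx0 with hax | hbx
      · exact ⟨a, by simp, hax⟩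
      · exact ⟨b, by simp, hbx⟩
  refine ⟨Finset.univ.image z ∪ T, Finset.union_subset ?_ hTD, ?_, ?_⟩
  · intro _ hd
    obtain ⟨i, -, rfl⟩ := Finset.mem_image.mp hd
    exact (hzD ⟨i, rfl⟩).1
  · calc (Finset.univ.image z ∪ T).card ≤ Fintype.card ι + T.card :=
          (Finset.card_union_le _ _).trans (by gcongr; exact Finset.card_image_le)
      _ ≤ 4 := by omega
  · simpa using halfspacesCover_union_of_sum_smul_eq_zero hw hwz hT

theorem HalfspacesCover.exists_subset_card_le_four_image {α : Type*} (hE : finrank ℝ E = 2)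
    {H : Finset α} {f : α → E} (h : HalfspacesCover (f '' H)) :
    ∃ R ⊆ H, R.card ≤ 4 ∧ HalfspacesCover (f '' R) := by
  classical
  obtain ⟨S, hSH, hS4, hS⟩ := HalfspacesCover.exists_subset_card_le_four hE (D := H.image f)
    (by simpa using h)
  obtain ⟨R, hRH, hinj, rfl⟩ :=
    Finset.exists_subset_injOn_image_eq_of_surjOn (H : Set α) S fun d hd => by simpa using hSH hd
  exact ⟨R, hRH, (Finset.card_image_of_injOn hinj).symm.trans_le hS4, by simpa using hS⟩

end HalfspacesCover

section GreatCircle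

variable {v w x : EuclideanSpace ℝ (Fin 3)}

theorem mem_greatCircle_iff : x ∈ greatCircle v ↔ x ∈ unitSphere ∧ x ∈ (ℝ ∙ v)ᗮ := by
  rw [mem_orthogonal_singleton_iff_inner_right]
  rfl

theorem greatCircle_subset_closedHemisphere_neg : greatCircle v ⊆ closedHemisphere (-v) :=
  fun _ hx => ⟨hx.1, by rw [inner_neg_left, hx.2, neg_zero]⟩

theorem inv_norm_smul_mem_greatCircle (hx : x ∈ (ℝ ∙ v)ᗮ) (hx0 : x ≠ 0) :
    ‖x‖⁻¹ • x ∈ greatCircle v :=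
  mem_greatCircle_iff.2
    ⟨mem_sphere_zero_iff_norm.2 (norm_smul_inv_norm (𝕜 := ℝ) hx0), smul_mem _ _ hx⟩

theorem openHemisphere_inter_greatCircle :
    openHemisphere w ∩ greatCircle v =
      {x ∈ greatCircle v |
        0 < ⟪((ℝ ∙ v)ᗮ.orthogonalProjectionOnto w : EuclideanSpace ℝ (Fin 3)), x⟫} := by
  ext x
  rw [Set.mem_inter_iff, and_comm]
  refine and_congr_right fun hx => ?_
  have hxK := (mem_greatCircle_iff.1 hx).2
  have := inner_orthogonalProjectionOnto_eq_of_mem_right (K := (ℝ ∙ v)ᗮ) ⟨x, hxK⟩ w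
  exact (and_iff_right hx.1).trans (by rw [← this]; rfl)

theorem exists_openHemisphere_inter_greatCircle_eq
    (hne : (openHemisphere w ∩ greatCircle v).Nonempty) :
    ∃ u : EuclideanSpace ℝ (Fin 3), ‖u‖ = 1 ∧ ⟪v, u⟫ = 0 ∧
      openHemisphere w ∩ greatCircle v = {x ∈ greatCircle v | 0 < ⟪u, x⟫} := by
  rw [openHemisphere_inter_greatCircle] at hne ⊢
  set p : EuclideanSpace ℝ (Fin 3) := (ℝ ∙ v)ᗮ.orthogonalProjectionOnto w
  have hp : p ≠ 0 := by
    obtain ⟨x, -, hx⟩ := hne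
    rintro hp
    simp [hp] at hx
  refine ⟨‖p‖⁻¹ • p, norm_smul_inv_norm (𝕜 := ℝ) hp, ?_, ?_⟩
  · rw [real_inner_smul_right, mem_orthogonal_singleton_iff_inner_right.1 (Submodule.coe_mem _),
      mul_zero]
  · simp_rw [real_inner_smul_left, mul_pos_iff_of_pos_left (inv_pos.2 (norm_pos_iff.2 hp))]

theorem halfspacesCover_image_orthogonalProjectionOnto_iff {S : Set (EuclideanSpace ℝ (Fin 3))} :
    HalfspacesCover ((ℝ ∙ v)ᗮ.orthogonalProjectionOnto '' S) ↔
      greatCircle v ⊆ ⋃ w ∈ S, openHemisphere w := by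
  constructor
  · intro h x hx
    obtain ⟨hxS, hxK⟩ := mem_greatCircle_iff.1 hx
    have hx0 : (⟨x, hxK⟩ : (ℝ ∙ v)ᗮ) ≠ 0 :=
      (Submodule.mk_eq_zero _ _).not.2 (Metric.ne_of_mem_sphere hxS one_ne_zero)
    obtain ⟨_, ⟨w, hw, rfl⟩, hwx⟩ := h _ hx0
    rw [inner_orthogonalProjectionOnto_eq_of_mem_right] at hwx
    exact Set.mem_iUnion₂.2 ⟨w, hw, hxS, hwx⟩
  · intro h x hx0
    have hx0' : (x : EuclideanSpace ℝ (Fin 3)) ≠ 0 := by simpa using hx0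
    obtain ⟨w, hw, -, hwx⟩ := Set.mem_iUnion₂.1 (h (inv_norm_smul_mem_greatCircle x.2 hx0'))
    rw [real_inner_smul_right, mul_pos_iff_of_pos_left (inv_pos.2 (norm_pos_iff.2 hx0'))] at hwx
    exact ⟨_, ⟨w, hw, rfl⟩, by rwa [inner_orthogonalProjectionOnto_eq_of_mem_right]⟩

end GreatCircle

theorem traces_cover_great_circle_general
    (v : EuclideanSpace ℝ (Fin 3)) (hv : ‖v‖ = 1)
    (H : Finset (EuclideanSpace ℝ (Fin 3)))
    (hcover : closedHemisphere (-v) ⊆ ⋃ w ∈ H, openHemisphere w) :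
    (∀ w ∈ H, (openHemisphere w ∩ greatCircle v).Nonempty →
      ∃ u : EuclideanSpace ℝ (Fin 3), ‖u‖ = 1 ∧ ⟪v, u⟫ = 0 ∧
        openHemisphere w ∩ greatCircle v =
          {x ∈ greatCircle v | 0 < ⟪u, x⟫}) ∧
    greatCircle v ⊆ ⋃ w ∈ H, openHemisphere w ∩ greatCircle v ∧
    ∃ R ⊆ H, R.card ≤ 4 ∧
      greatCircle v ⊆ ⋃ w ∈ R, openHemisphere w ∩ greatCircle v := by
  have htraces {S : Finset (EuclideanSpace ℝ (Fin 3))}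
      (hS : greatCircle v ⊆ ⋃ w ∈ S, openHemisphere w) :
      greatCircle v ⊆ ⋃ w ∈ S, openHemisphere w ∩ greatCircle v := fun x hx => by
    simpa [hx] using hS hx
  have hC : greatCircle v ⊆ ⋃ w ∈ H, openHemisphere w :=
    greatCircle_subset_closedHemisphere_neg.trans hcover
  have hK : finrank ℝ (ℝ ∙ v)ᗮ = 2 := by
    have : Fact (finrank ℝ (EuclideanSpace ℝ (Fin 3)) = 2 + 1) := ⟨by simp⟩
    exact finrank_orthogonal_span_singleton (by rintro rfl; simp at hv)
  obtain ⟨R, hRH, hR4, hR⟩ :=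
    (halfspacesCover_image_orthogonalProjectionOnto_iff.2 hC).exists_subset_card_le_four_image hK
  exact ⟨fun w _ => exists_openHemisphere_inter_greatCircle_eq, htraces hC, R, hRH, hR4,
    htraces (halfspacesCover_image_orthogonalProjectionOnto_iff.1 hR)⟩

/-- Let `h` be the open hemisphere of a unit vector `v`, with boundary great
circle `C`, and let `H` be a finite set of open unit hemispheres covering
`S² \ h` (equivalently, the closed hemisphere of `-v`).  Then the nonempty
traces `g ∩ C`, `g ∈ H`, are open semicircles of `C` covering `C`, and hence
at most four members of `H` already cover `C`. -/
theorem traces_cover_great_circle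
    (v : EuclideanSpace ℝ (Fin 3)) (hv : ‖v‖ = 1)
    (H : Finset (EuclideanSpace ℝ (Fin 3))) (hH : ∀ w ∈ H, ‖w‖ = 1)
    (hcover : closedHemisphere (-v) ⊆ ⋃ w ∈ H, openHemisphere w) :
    (∀ w ∈ H, (openHemisphere w ∩ greatCircle v).Nonempty →
      ∃ u : EuclideanSpace ℝ (Fin 3), ‖u‖ = 1 ∧ ⟪v, u⟫ = 0 ∧
        openHemisphere w ∩ greatCircle v =
          {x ∈ greatCircle v | 0 < ⟪u, x⟫}) ∧
    greatCircle v ⊆ ⋃ w ∈ H, openHemisphere w ∩ greatCircle v ∧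
    ∃ R ⊆ H, R.card ≤ 4 ∧
      greatCircle v ⊆ ⋃ w ∈ R, openHemisphere w ∩ greatCircle v :=
  traces_cover_great_circle_general v hv H hcover
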